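/- Assume b₁, …, b₅ are pairwise distinct nonzero complex numbers. For every point (x, y₇, y₈) ∈ ℂ³ at which ǔf₁₄, ǔf₁₅ and ǔf₁₆ all vanish, the 3×3 matrix whose (i,j)-entry is the partial derivative of ǔf₍₁₃₊ᵢ₎ with respect to the j-th variable (variables ordered x, y₇, y₈), evaluated at (x, y₇, y₈), has rank 2. In particular this holds at the point (0, 0, 0). -/

import Mathlib

/-
The chart is `y₇² = y₈ g`, `y₇ y₈ = g k`, `y₈² = y₇ k` with `g = x ǔk₂(x)` and `k = ǔk₃(x)`.
On it the rows of the Jacobian satisfy the linear relations with coefficients `(k, −y₈, y₇)`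
and `(y₈, −y₇, g)`, one of which is nontrivial at every point, so the rank is at most `2`.
Off the locus `y₇ = y₈ = 0` the minor `3 y₇ y₈` is nonzero; on it the minors are `−g (gk)'`
and `k (gk)'`, and `(gk)' ≠ 0` at the roots of `gk = x ∏ᵢ (1 − bᵢx)` because this polynomial
is separable when the `bᵢ` are distinct.
-/

open MvPolynomial

/-- `ǔk₃(x) = (1−b₁x)(1−b₂x)(1−b₃x)` in `ℂ[x,y₇,y₈]` (variables `X 0 = x`, `X 1 = y₇`,
`X 2 = y₈`). -/
noncomputable def uk3X4 (b : Fin 5 → ℂ) : MvPolynomial (Fin 3) ℂ :=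
  (1 - C (b 0) * X 0) * (1 - C (b 1) * X 0) * (1 - C (b 2) * X 0)

/-- `ǔk₂(x) = (1−b₄x)(1−b₅x)` in `ℂ[x,y₇,y₈]`. -/
noncomputable def uk2X4 (b : Fin 5 → ℂ) : MvPolynomial (Fin 3) ℂ :=
  (1 - C (b 3) * X 0) * (1 - C (b 4) * X 0)

/-- The triple `(ǔf₁₄, ǔf₁₅, ǔf₁₆)` defining the affine chart of the `(3,7,8)` curve
containing the point at infinity. -/
noncomputable def ufX4 (b : Fin 5 → ℂ) : Fin 3 → MvPolynomial (Fin 3) ℂ :=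
  ![(X 1) ^ 2 - X 2 * (X 0 * uk2X4 b),
    X 1 * X 2 - X 0 * uk2X4 b * uk3X4 b,
    (X 2) ^ 2 - X 1 * uk3X4 b]

namespace Matrix

variable {K m n : Type*} [Field K] [Fintype n]

theorem rank_lt_card_of_vecMul_eq_zero [Fintype m] {M : Matrix m n K} {w : m → K}
    (hw : w ≠ 0) (h : w ᵥ* M = 0) : M.rank < Fintype.card m := by
  have hmul : replicateRow (Fin 1) w * M = 0 := by
    rw [← replicateRow_vecMul, h, replicateRow_zero]
  have hrow : (replicateRow (Fin 1) w).rank = 1 := by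
    have hrange : Set.range (replicateRow (Fin 1) w).row = {w} := Set.range_const
    rw [rank_eq_finrank_span_row, hrange, finrank_span_singleton hw]
  have := rank_add_rank_le_card_of_mul_eq_zero hmul
  omega

theorem le_rank_of_det_submatrix_ne_zero {M : Matrix m n K} {k : ℕ} (r : Fin k → m)
    (c : Fin k → n) (h : (M.submatrix r c).det ≠ 0) : k ≤ M.rank :=
  calc k = (M.submatrix r c).rank := by
        rw [rank_of_isUnit _ ((isUnit_iff_isUnit_det _).2 h.isUnit), Fintype.card_fin]
    _ ≤ M.rank := rank_submatrix_le _ _ _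

theorem two_le_rank_of_mul_sub_mul_ne_zero {M : Matrix m n K} (i₁ i₂ : m) (j₁ j₂ : n)
    (h : M i₁ j₁ * M i₂ j₂ - M i₁ j₂ * M i₂ j₁ ≠ 0) : 2 ≤ M.rank :=
  le_rank_of_det_submatrix_ne_zero ![i₁, i₂] ![j₁, j₂] (by rwa [det_fin_two])

end Matrix

namespace Polynomial

theorem separable_one_sub_C_mul_X {R : Type*} [CommRing R] (a : R) :
    (1 - C a * X).Separable :=
  ⟨1, -X, by simp⟩

theorem isCoprime_X_one_sub_C_mul_X {R : Type*} [CommRing R] (a : R) :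
    IsCoprime X (1 - C a * X) :=
  ⟨C a, 1, by ring⟩

theorem isCoprime_one_sub_C_mul_X {K : Type*} [Field K] {a c : K} (h : a ≠ c) :
    IsCoprime (1 - C a * X) (1 - C c * X) := by
  have hunit : C (c - a)⁻¹ * (C c - C a) = 1 := by
    rw [← C_sub, ← C_mul, inv_mul_cancel₀ (sub_ne_zero.2 h.symm), C_1]
  exact ⟨C (c - a)⁻¹ * C c, -(C (c - a)⁻¹ * C a), by linear_combination hunit⟩

theorem separable_X_mul_prod_one_sub_C_mul_X {K ι : Type*} [Field K] [Fintype ι] {b : ι → K}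
    (hb : Function.Injective b) : (X * ∏ i, (1 - C (b i) * X)).Separable :=
  separable_X.mul
    (separable_prod (fun _ _ hij => isCoprime_one_sub_C_mul_X (hb.ne hij))
      fun i => separable_one_sub_C_mul_X (b i))
    (IsCoprime.prod_right fun i _ => isCoprime_X_one_sub_C_mul_X (b i))

end Polynomial

theorem MvPolynomial.pderiv_toMvPolynomial {R σ : Type*} [CommSemiring R] (i j : σ)
    (p : Polynomial R) :
    pderiv j (p.toMvPolynomial i) =
      (Polynomial.derivative p).toMvPolynomial i * pderiv j (X i) :=
  (pderiv j).map_aeval p (X i)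

section CurveEqns

variable {R : Type*} [CommRing R]

noncomputable def curveEqns (g k : Polynomial R) : Fin 3 → MvPolynomial (Fin 3) R :=
  ![X 1 ^ 2 - X 2 * g.toMvPolynomial 0, X 1 * X 2 - g.toMvPolynomial 0 * k.toMvPolynomial 0,
    X 2 ^ 2 - X 1 * k.toMvPolynomial 0]

def curveJacobian (u v g k g' k' : R) : Matrix (Fin 3) (Fin 3) R :=
  !![-(v * g'), 2 * u, -g; -(g' * k + g * k'), v, u; -(u * k'), -k, 2 * v]

theorem eval_curveEqns_eq_zero_iff (g k : Polynomial R) (p : Fin 3 → R) :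
    (∀ i, eval p (curveEqns g k i) = 0) ↔
      p 1 ^ 2 = p 2 * g.eval (p 0) ∧ p 1 * p 2 = g.eval (p 0) * k.eval (p 0) ∧
        p 2 ^ 2 = p 1 * k.eval (p 0) := by
  simp [Fin.forall_fin_succ, curveEqns, sub_eq_zero]

theorem jacobian_curveEqns (g k : Polynomial R) (p : Fin 3 → R) :
    Matrix.of (fun i j => eval p (pderiv j (curveEqns g k i))) =
      curveJacobian (p 1) (p 2) (g.eval (p 0)) (k.eval (p 0)) (g.derivative.eval (p 0))
        (k.derivative.eval (p 0)) := by
  ext i j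
  fin_cases i <;> fin_cases j <;> simp [curveEqns, curveJacobian, pderiv_toMvPolynomial]
  all_goals ring

end CurveEqns

section CurveJacobianRank

open Matrix

variable {K : Type*} [Field K] {u v g k g' k' : K}

theorem vecMul_curveJacobian_of_eqns (e1 : u ^ 2 = v * g) (e2 : u * v = g * k)
    (e3 : v ^ 2 = u * k) :
    ![k, -v, u] ᵥ* curveJacobian u v g k g' k' = 0 ∧
      ![v, -u, g] ᵥ* curveJacobian u v g k g' k' = 0 := by
  constructor
  · ext j
    fin_cases j <;> simp only [curveJacobian, vecMul, vec3_dotProduct, of_apply, Fin.isValue,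
      Fin.zero_eta, Fin.mk_one, Fin.reduceFinMk, cons_val, Pi.zero_apply]
    · linear_combination (-k') * e1
    · linear_combination -e3
    · linear_combination e2
  · ext j
    fin_cases j <;> simp only [curveJacobian, vecMul, vec3_dotProduct, of_apply, Fin.isValue,
      Fin.zero_eta, Fin.mk_one, Fin.reduceFinMk, cons_val, Pi.zero_apply]
    · linear_combination (-g') * e3
    · linear_combination e2
    · linear_combination -e1

theorem rank_curveJacobian_le_two (e1 : u ^ 2 = v * g) (e2 : u * v = g * k)
    (e3 : v ^ 2 = u * k) (hsep : g * k = 0 → g' * k + g * k' ≠ 0) :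
    (curveJacobian u v g k g' k').rank ≤ 2 := by
  obtain ⟨h₁, h₂⟩ := vecMul_curveJacobian_of_eqns (g' := g') (k' := k') e1 e2 e3
  by_cases hw : ![k, -v, u] = 0
  · obtain rfl : k = 0 := congrFun hw 0
    have hg : g ≠ 0 := by
      rintro rfl
      simp at hsep
    exact Nat.le_of_lt_succ (rank_lt_card_of_vecMul_eq_zero
      (fun h => hg (by simpa using congrFun h 2)) h₂)
  · exact Nat.le_of_lt_succ (rank_lt_card_of_vecMul_eq_zero hw h₁)

theorem two_le_rank_curveJacobian [CharZero K] (e1 : u ^ 2 = v * g) (e2 : u * v = g * k)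
    (e3 : v ^ 2 = u * k) (hsep : g * k = 0 → g' * k + g * k' ≠ 0) :
    2 ≤ (curveJacobian u v g k g' k').rank := by
  rcases eq_or_ne u 0 with rfl | hu
  · obtain rfl : v = 0 := pow_eq_zero_iff two_ne_zero |>.1 (by simpa using e3)
    have hD : g' * k + g * k' ≠ 0 := hsep (by linear_combination -e2)
    by_cases hg : g = 0
    · have hk : k ≠ 0 := by
        rintro rfl
        simp [hg] at hD
      refine two_le_rank_of_mul_sub_mul_ne_zero 1 2 0 1 ?_
      show -(g' * k + g * k') * -k - 0 * -(0 * k') ≠ 0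
      rw [show -(g' * k + g * k') * -k - 0 * -(0 * k') = (g' * k + g * k') * k by ring]
      exact mul_ne_zero hD hk
    · refine two_le_rank_of_mul_sub_mul_ne_zero 0 1 0 2 ?_
      show -(0 * g') * 0 - -g * -(g' * k + g * k') ≠ 0
      rw [show -(0 * g') * 0 - -g * -(g' * k + g * k') = -(g * (g' * k + g * k')) by ring]
      exact neg_ne_zero.2 (mul_ne_zero hg hD)
  · have hv : v ≠ 0 := by
      rintro rfl
      exact hu (pow_eq_zero_iff two_ne_zero |>.1 (by simpa using e1))
    refine two_le_rank_of_mul_sub_mul_ne_zero 0 2 1 2 ?_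
    show 2 * u * (2 * v) - -g * -k ≠ 0
    rw [show 2 * u * (2 * v) - -g * -k = 3 * (u * v) by linear_combination e2]
    exact mul_ne_zero three_ne_zero (mul_ne_zero hu hv)

theorem rank_curveJacobian [CharZero K] (e1 : u ^ 2 = v * g) (e2 : u * v = g * k)
    (e3 : v ^ 2 = u * k) (hsep : g * k = 0 → g' * k + g * k' ≠ 0) :
    (curveJacobian u v g k g' k').rank = 2 :=
  (rank_curveJacobian_le_two e1 e2 e3 hsep).antisymm (two_le_rank_curveJacobian e1 e2 e3 hsep)

theorem rank_jacobian_curveEqns [CharZero K] {g k : Polynomial K} (hsep : (g * k).Separable)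
    (p : Fin 3 → K) (hp : ∀ i, eval p (curveEqns g k i) = 0) :
    (Matrix.of fun i j => eval p (pderiv j (curveEqns g k i))).rank = 2 := by
  obtain ⟨e1, e2, e3⟩ := (eval_curveEqns_eq_zero_iff g k p).1 hp
  rw [jacobian_curveEqns]
  refine rank_curveJacobian e1 e2 e3 fun h => ?_
  simpa [Polynomial.derivative_mul] using
    hsep.eval₂_derivative_ne_zero (RingHom.id K) (x := p 0) (by simpa using h)

end CurveJacobianRank

noncomputable def xk2Poly (b : Fin 5 → ℂ) : Polynomial ℂ :=
  Polynomial.X *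
    ((1 - Polynomial.C (b 3) * Polynomial.X) * (1 - Polynomial.C (b 4) * Polynomial.X))

noncomputable def k3Poly (b : Fin 5 → ℂ) : Polynomial ℂ :=
  (1 - Polynomial.C (b 0) * Polynomial.X) * (1 - Polynomial.C (b 1) * Polynomial.X) *
    (1 - Polynomial.C (b 2) * Polynomial.X)

theorem ufX4_eq_curveEqns (b : Fin 5 → ℂ) : ufX4 b = curveEqns (xk2Poly b) (k3Poly b) := by
  simp [ufX4, curveEqns, uk2X4, uk3X4, xk2Poly, k3Poly]

theorem separable_xk2Poly_mul_k3Poly {b : Fin 5 → ℂ} (hb : Function.Injective b) :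
    (xk2Poly b * k3Poly b).Separable := by
  have hprod : xk2Poly b * k3Poly b =
      Polynomial.X * ∏ i, (1 - Polynomial.C (b i) * Polynomial.X) := by
    simp only [xk2Poly, k3Poly, Fin.prod_univ_five]
    ring
  rw [hprod]
  exact Polynomial.separable_X_mul_prod_one_sub_C_mul_X hb

theorem rank_uU4_general (b : Fin 5 → ℂ) (hb : Function.Injective b) :
    (∀ p : Fin 3 → ℂ, (∀ i : Fin 3, MvPolynomial.eval p (ufX4 b i) = 0) →
      (Matrix.of fun i j : Fin 3 =>
          MvPolynomial.eval p (MvPolynomial.pderiv j (ufX4 b i))).rank = 2) ∧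
    (∀ i : Fin 3, MvPolynomial.eval (fun _ => (0 : ℂ)) (ufX4 b i) = 0) ∧
    (Matrix.of fun i j : Fin 3 =>
        MvPolynomial.eval (fun _ => (0 : ℂ)) (MvPolynomial.pderiv j (ufX4 b i))).rank = 2 := by
  have hrank : ∀ p : Fin 3 → ℂ, (∀ i, eval p (ufX4 b i) = 0) →
      (Matrix.of fun i j => eval p (pderiv j (ufX4 b i))).rank = 2 := by
    rw [ufX4_eq_curveEqns]
    exact rank_jacobian_curveEqns (separable_xk2Poly_mul_k3Poly hb)
  have horigin : ∀ i, eval (fun _ => (0 : ℂ)) (ufX4 b i) = 0 := by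
    intro i
    fin_cases i <;> simp [ufX4]
  exact ⟨hrank, horigin, hrank _ horigin⟩

/-- For pairwise distinct nonzero `b₁, …, b₅`, at every common zero `(x, y₇, y₈) ∈ ℂ³` of
`ǔf₁₄, ǔf₁₅, ǔf₁₆`, the Jacobian matrix has rank `2`; in particular this holds at
`(0, 0, 0)`, which is a common zero. -/
theorem rank_uU4 (b : Fin 5 → ℂ) (hb : Function.Injective b) (hb0 : ∀ i, b i ≠ 0) :
    (∀ p : Fin 3 → ℂ, (∀ i : Fin 3, MvPolynomial.eval p (ufX4 b i) = 0) →
      (Matrix.of fun i j : Fin 3 =>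
          MvPolynomial.eval p (MvPolynomial.pderiv j (ufX4 b i))).rank = 2) ∧
    (∀ i : Fin 3, MvPolynomial.eval (fun _ => (0 : ℂ)) (ufX4 b i) = 0) ∧
    (Matrix.of fun i j : Fin 3 =>
        MvPolynomial.eval (fun _ => (0 : ℂ)) (MvPolynomial.pderiv j (ufX4 b i))).rank = 2 :=
  rank_uU4_general b hb
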